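/- Under the setting of the previous statement, suppose additionally $p^+ := \max_{x \in A}(K_{AB}\mathbf{1}_B)(x)$ satisfies $p^+ T^E_Q < 1$. Then $\left|1 - \frac{\nu_Q K_{AB}\mathbf{1}_B}{\pi_{0|A} K_{AB}\mathbf{1}_B}\right| \leq p^+ T^E_Q$, and consequently $\left|1 - \frac{\pi_{0|A}K_{AB}\mathbf{1}_B}{\nu_Q K_{AB}\mathbf{1}_B}\right| \leq \frac{p^+ T^E_Q}{1 - p^+ T^E_Q}$. -/

import Mathlib

open Matrix BigOperators

/-!
`(I - K_A)⁻¹` cancels the factor `I - K_A` in `ν_E`, so `ν_E H_Q` is the signed measure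
`(π_{0|A} - ν_Q) / (π_{0|A} K_{AB} 𝟙_B)`. Paired with the exit probability `K_{AB} 𝟙_B ≤ p⁺`
it gives `1 - ν_Q K_{AB} 𝟙_B / π_{0|A} K_{AB} 𝟙_B`, of size at most `p⁺ T^E_Q`. The second
bound follows by inverting a ratio that lies within `t < 1` of `1`.
-/

namespace Matrix

variable {n : Type*} [Fintype n]

theorem vecMul_one_sub_of_const_rows [DecidableEq n] (μ ν : n → ℝ) :
    μ ᵥ* (1 - Matrix.of fun _ y => ν y) = μ - (∑ x, μ x) • ν := by
  rw [vecMul_sub, vecMul_one]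
  ext y
  simp [vecMul, dotProduct, Finset.sum_mul]

theorem vecMul_vecMul_nonsing_inv_mul [DecidableEq n] (μ : n → ℝ) {M : Matrix n n ℝ}
    (hM : IsUnit M) (N : Matrix n n ℝ) : (μ ᵥ* M) ᵥ* (M⁻¹ * N) = μ ᵥ* N := by
  rw [vecMul_vecMul, ← Matrix.mul_assoc, mul_nonsing_inv _ ((isUnit_iff_isUnit_det M).mp hM),
    Matrix.one_mul]

theorem abs_dotProduct_le_sum_abs_mul (μ f : n → ℝ) {c : ℝ} (hf : ∀ x, |f x| ≤ c) :
    |μ ⬝ᵥ f| ≤ (∑ x, |μ x|) * c :=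
  calc |μ ⬝ᵥ f| ≤ ∑ x, |μ x| * |f x| := by
        simpa only [dotProduct, abs_mul] using Finset.abs_sum_le_sum_abs (fun x => μ x * f x) _
    _ ≤ ∑ x, |μ x| * c :=
        Finset.sum_le_sum fun x _ => mul_le_mul_of_nonneg_left (hf x) (abs_nonneg _)
    _ = (∑ x, |μ x|) * c := (Finset.sum_mul _ _ _).symm

end Matrix

theorem abs_one_sub_inv_le {r t : ℝ} (h : |1 - r| ≤ t) (ht : t < 1) :
    |1 - r⁻¹| ≤ t / (1 - t) := by
  have hr : 1 - t ≤ r := by linarith [(abs_le.mp h).2]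
  have hr0 : 0 < r := by linarith
  rw [show 1 - r⁻¹ = -(1 - r) / r by field_simp; ring, abs_div, abs_neg, abs_of_pos hr0,
    div_le_div_iff₀ hr0 (by linarith)]
  nlinarith [abs_nonneg (1 - r)]

theorem abs_one_sub_div_le_of_abs_one_sub_div_le {a b t : ℝ} (h : |1 - a / b| ≤ t)
    (ht : t < 1) : |1 - b / a| ≤ t / (1 - t) := by
  simpa only [inv_div] using abs_one_sub_inv_le h ht

theorem stmt12_general {A B : Type*} [Fintype A] [Fintype B] [DecidableEq A]
    (K : Matrix (A ⊕ B) (A ⊕ B) ℝ)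
    (hK0 : ∀ i j, 0 ≤ K i j)
    (π0 : A ⊕ B → ℝ)
    (hA : 0 < ∑ x : A, π0 (Sum.inl x))
    (KA : Matrix A A ℝ)
    (KAB : Matrix A B ℝ) (hKAB : ∀ x y, KAB x y = K (Sum.inl x) (Sum.inr y))
    (hU : IsUnit (1 - KA))
    (νQ : A → ℝ)
    (πc : A → ℝ) (hπc : πc = (∑ x : A, π0 (Sum.inl x))⁻¹ • fun x => π0 (Sum.inl x))
    (flux : ℝ) (hflux : flux = ∑ x, πc x * ∑ b, KAB x b) (hfluxpos : 0 < flux)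
    (νE : A → ℝ) (hνE : νE = flux⁻¹ • (πc ᵥ* (1 - KA)))
    (HQ : Matrix A A ℝ)
    (hHQ : HQ = (1 - KA)⁻¹ * (1 - Matrix.of fun _ y => νQ y))
    (TEQ : ℝ) (hTEQ : TEQ = ∑ x, |(νE ᵥ* HQ) x|)
    (pPlus : ℝ) (hpPlus : pPlus = ⨆ x : A, ∑ b, KAB x b)
    (hcond : pPlus * TEQ < 1) :
    |1 - (∑ x, νQ x * ∑ b, KAB x b) / flux| ≤ pPlus * TEQ ∧
    |1 - flux / (∑ x, νQ x * ∑ b, KAB x b)| ≤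
      pPlus * TEQ / (1 - pPlus * TEQ) := by
  set exit : A → ℝ := fun x => ∑ b, KAB x b
  have hexit : ∀ x, |exit x| ≤ pPlus := fun x => by
    rw [abs_of_nonneg (Finset.sum_nonneg fun b _ => hKAB x b ▸ hK0 _ _), hpPlus]
    exact le_ciSup (Set.finite_range _).bddAbove x
  have hπc_mass : ∑ x, πc x = 1 := by
    simp only [hπc, Pi.smul_apply, smul_eq_mul, ← Finset.mul_sum, inv_mul_cancel₀ hA.ne']
  have hνEHQ : νE ᵥ* HQ = flux⁻¹ • (πc - νQ) := by
    rw [hνE, hHQ, smul_vecMul, vecMul_vecMul_nonsing_inv_mul _ hU, vecMul_one_sub_of_const_rows,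
      hπc_mass, one_smul]
  have hpairing : (νE ᵥ* HQ) ⬝ᵥ exit = 1 - (νQ ⬝ᵥ exit) / flux := by
    rw [hνEHQ, smul_dotProduct, sub_dotProduct, smul_eq_mul, mul_sub,
      show πc ⬝ᵥ exit = flux from hflux.symm, inv_mul_cancel₀ hfluxpos.ne', inv_mul_eq_div]
  have hfirst : |1 - (νQ ⬝ᵥ exit) / flux| ≤ pPlus * TEQ := by
    rw [← hpairing, mul_comm, hTEQ]
    exact abs_dotProduct_le_sum_abs_mul _ _ hexit
  exact ⟨hfirst, abs_one_sub_div_le_of_abs_one_sub_div_le hfirst hcond⟩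

/-- Under the setting of the biasing-error lemma, if `p⁺ T^E_Q < 1` then
`|1 - ν_Q K_{AB}𝟙_B / π_{0|A} K_{AB}𝟙_B| ≤ p⁺ T^E_Q` and
`|1 - π_{0|A} K_{AB}𝟙_B / ν_Q K_{AB}𝟙_B| ≤ p⁺ T^E_Q / (1 - p⁺ T^E_Q)`. -/
theorem stmt12 {A B : Type*} [Fintype A] [Fintype B] [DecidableEq A] [Nonempty A] [Nonempty B]
    (K : Matrix (A ⊕ B) (A ⊕ B) ℝ)
    (hK0 : ∀ i j, 0 ≤ K i j) (hK1 : ∀ i, ∑ j, K i j = 1)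
    (π0 : A ⊕ B → ℝ) (hπnn : ∀ i, 0 ≤ π0 i) (hπ1 : ∑ i, π0 i = 1)
    (hstat : π0 ᵥ* K = π0)
    (hA : 0 < ∑ x : A, π0 (Sum.inl x))
    (KA : Matrix A A ℝ) (hKA : ∀ x y, KA x y = K (Sum.inl x) (Sum.inl y))
    (KAB : Matrix A B ℝ) (hKAB : ∀ x y, KAB x y = K (Sum.inl x) (Sum.inr y))
    (hU : IsUnit (1 - KA))
    (νQ : A → ℝ) (hν0 : ∀ x, 0 ≤ νQ x) (hν1 : ∑ x, νQ x = 1)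
    (p : ℝ) (heig : νQ ᵥ* KA = (1 - p) • νQ)
    (πc : A → ℝ) (hπc : πc = (∑ x : A, π0 (Sum.inl x))⁻¹ • fun x => π0 (Sum.inl x))
    (flux : ℝ) (hflux : flux = ∑ x, πc x * ∑ b, KAB x b) (hfluxpos : 0 < flux)
    (νE : A → ℝ) (hνE : νE = flux⁻¹ • (πc ᵥ* (1 - KA)))
    (HQ : Matrix A A ℝ)
    (hHQ : HQ = (1 - KA)⁻¹ * (1 - Matrix.of fun _ y => νQ y))
    (TEQ : ℝ) (hTEQ : TEQ = ∑ x, |(νE ᵥ* HQ) x|)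
    (pPlus : ℝ) (hpPlus : pPlus = ⨆ x : A, ∑ b, KAB x b)
    (hcond : pPlus * TEQ < 1) :
    |1 - (∑ x, νQ x * ∑ b, KAB x b) / flux| ≤ pPlus * TEQ ∧
    |1 - flux / (∑ x, νQ x * ∑ b, KAB x b)| ≤
      pPlus * TEQ / (1 - pPlus * TEQ) :=
  stmt12_general K hK0 π0 hA KA KAB hKAB hU νQ πc hπc flux hflux hfluxpos νE hνE HQ hHQ TEQ hTEQ
    pPlus hpPlus hcond
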